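/- Let J = diag(J1,J2,J3) with J1,J2,J3 > 0 and E(w) := J^{-1}(Jw × w). Let (R, ω) solve the free-rotation dynamics R'(t) = R(t)·[ω(t)]ₓ, ω'(t) = E(ω(t)) with R(t₀) ∈ SO(3). Assume ω is periodic with some period τ > 0 and the image {ω(t) : t ∈ ℝ} is not contained in any affine plane of ℝ³. Let å ∈ ℝ³ be any unit vector and a(t) := R(t)ᵀ·å. Then there exist T > 0 and μ ∈ (0,1) such that the persistent excitation condition holds: (1/T)·∫_t^{t+T} [a(s)]ₓᵀ[a(s)]ₓ ds ≥ μ·I for all t. -/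

import Mathlib

/-!
Every `b(t) = R(t)ᵀ v` solves `b' = b × ω`, so inner products of such solutions are constant
and `R(t)` stays orthogonal; as `ω` is `τ`-periodic, `R(t + nτ)ᵀ v = R(t)ᵀ w` for another unit
vector `w`. Since `|a| = 1`, the PE inequality in the direction of a unit `x` reads
`T⁻¹ ∫ (a · x)² ≤ 1 - μ`, so it suffices to bound `∫_t^{t+τ} (R(s)ᵀ v · x)²` by some `m < τ`
uniformly in `t ∈ [0, τ]` and unit `v, x`, which compactness gives once each such integral is
`< τ`. If one of them equalled `τ`, then `(b · x)² ≡ 1` over a period, so `b = ±x` would be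
stationary there and `x × ω = 0`: the periodic curve `ω` would lie on the line `ℝ x`, hence in
a plane.
-/
open Matrix MeasureTheory intervalIntegral

noncomputable section

attribute [local instance] Matrix.normedAddCommGroup Matrix.normedSpace

def cross3 (x y : Fin 3 → ℝ) : Fin 3 → ℝ :=
  ![x 1 * y 2 - x 2 * y 1, x 2 * y 0 - x 0 * y 2, x 0 * y 1 - x 1 * y 0]

def enorm3 (x : Fin 3 → ℝ) : ℝ := Real.sqrt (∑ i, (x i) ^ 2)

def skew3 (x : Fin 3 → ℝ) : Matrix (Fin 3) (Fin 3) ℝ :=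
  !![0, -x 2, x 1; x 2, 0, -x 0; -x 1, x 0, 0]

def PE (a : ℝ → Fin 3 → ℝ) (T μ : ℝ) : Prop :=
  ∀ t : ℝ,
    ((T⁻¹ • ∫ τ in t..(t + T), (skew3 (a τ))ᵀ * skew3 (a τ)) -
      μ • (1 : Matrix (Fin 3) (Fin 3) ℝ)).PosSemidef

def nrm6sq (Z : Fin 3 ⊕ Fin 3 → ℝ) : ℝ := ∑ i, (Z i) ^ 2

def Amat (a : Fin 3 → ℝ) : Matrix (Fin 3 ⊕ Fin 3) (Fin 3 ⊕ Fin 3) ℝ :=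
  Matrix.fromBlocks (-1) (skew3 a) (skew3 a) 0

lemma skew3_mulVec (a x : Fin 3 → ℝ) : skew3 a *ᵥ x = a ⨯₃ x := by
  ext i; fin_cases i <;> simp [skew3, cross_apply, mulVec, dotProduct, Fin.sum_univ_three] <;> ring

lemma vecMul_skew3 (x a : Fin 3 → ℝ) : x ᵥ* skew3 a = x ⨯₃ a := by
  ext i; fin_cases i <;> simp [skew3, cross_apply, vecMul, dotProduct, Fin.sum_univ_three] <;> ring

lemma continuous_skew3 : Continuous skew3 :=
  continuous_pi fun i => continuous_pi fun j => by
    fin_cases i <;> fin_cases j <;> simp [skew3] <;> fun_prop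

lemma mulVec_dotProduct_mulVec {m n R : Type*} [Fintype m] [Fintype n] [CommSemiring R]
    (A : Matrix m n R) (u v : n → R) : A *ᵥ u ⬝ᵥ A *ᵥ v = u ⬝ᵥ (Aᵀ * A) *ᵥ v := by
  rw [← mulVec_mulVec, dotProduct_mulVec u, vecMul_transpose]

lemma sq_dotProduct_le (b x : Fin 3 → ℝ) : (b ⬝ᵥ x) ^ 2 ≤ (b ⬝ᵥ b) * (x ⬝ᵥ x) := by
  have hlagrange := cross_dot_cross b x b x
  have hnonneg : 0 ≤ b ⨯₃ x ⬝ᵥ b ⨯₃ x := by simpa using dotProduct_self_star_nonneg (b ⨯₃ x)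
  rw [dotProduct_comm x b] at hlagrange
  nlinarith

lemma eq_dotProduct_smul_of_sq_dotProduct_eq_one {b x : Fin 3 → ℝ} (hb : b ⬝ᵥ b = 1)
    (hx : x ⬝ᵥ x = 1) (h : (b ⬝ᵥ x) ^ 2 = 1) : b = (b ⬝ᵥ x) • x := by
  have hbx : b ⨯₃ x = 0 := by
    rw [← dotProduct_self_eq_zero, cross_dot_cross, hb, hx, dotProduct_comm x b]
    linarith
  have := cross_cross_eq_smul_sub_smul b x x
  rw [hbx, map_zero, LinearMap.zero_apply, hx, one_smul] at this
  exact (sub_eq_zero.1 this.symm).symm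

lemma isCompact_setOf_dotProduct_self_eq_one {ι : Type*} [Fintype ι] :
    IsCompact {v : ι → ℝ | v ⬝ᵥ v = 1} := by
  refine Metric.isCompact_of_isClosed_isBounded (isClosed_eq (by fun_prop) continuous_const)
    ((Metric.isBounded_closedBall (x := 0) (r := 1)).subset fun v hv => ?_)
  rw [mem_closedBall_zero_iff, pi_norm_le_iff_of_nonneg zero_le_one]
  intro i
  have hv : v ⬝ᵥ v = 1 := hv
  rw [Real.norm_eq_abs, abs_le_one_iff_mul_self_le_one, ← hv]
  exact Finset.single_le_sum (f := fun i => v i * v i) (fun i _ => mul_self_nonneg (v i))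
    (Finset.mem_univ i)

lemma le_mul_dotProduct_self_of_forall_dotProduct_self_eq_one {ι : Type*} [Fintype ι]
    {q : (ι → ℝ) → ℝ} {m : ℝ} (hq : ∀ (c : ℝ) x, q (c • x) = c ^ 2 * q x)
    (h : ∀ x, x ⬝ᵥ x = 1 → q x ≤ m) (x : ι → ℝ) : q x ≤ m * (x ⬝ᵥ x) := by
  rcases eq_or_ne x 0 with rfl | hx
  · simpa using (hq 0 0).le
  have hpos : 0 < x ⬝ᵥ x := lt_of_le_of_ne (by simpa using dotProduct_self_star_nonneg x)
    (Ne.symm (dotProduct_self_eq_zero.not.2 hx))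
  set r := √(x ⬝ᵥ x)
  have hr : 0 < r := Real.sqrt_pos.2 hpos
  have hrsq : r ^ 2 = x ⬝ᵥ x := Real.sq_sqrt hpos.le
  have hunit : r⁻¹ • x ⬝ᵥ r⁻¹ • x = 1 := by
    rw [smul_dotProduct, dotProduct_smul, smul_smul, ← hrsq, smul_eq_mul]
    field_simp
  calc q x = r ^ 2 * q (r⁻¹ • x) := by rw [← hq, smul_smul, mul_inv_cancel₀ hr.ne', one_smul]
    _ ≤ r ^ 2 * m := by gcongr; exact h _ hunit
    _ = m * (x ⬝ᵥ x) := by rw [hrsq, mul_comm]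

theorem HasDerivAt.dotProduct {ι : Type*} [Fintype ι] {b c : ℝ → ι → ℝ} {b' c' : ι → ℝ} {t : ℝ}
    (hb : HasDerivAt b b' t) (hc : HasDerivAt c c' t) :
    HasDerivAt (fun s => b s ⬝ᵥ c s) (b' ⬝ᵥ c t + b t ⬝ᵥ c') t := by
  simp only [_root_.dotProduct, ← Finset.sum_add_distrib]
  exact HasDerivAt.fun_sum fun i _ => (hasDerivAt_pi.1 hb i).mul (hasDerivAt_pi.1 hc i)

theorem HasDerivAt.transpose_mulVec {m n : Type*} [Fintype m] [Fintype n]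
    {R : ℝ → Matrix m n ℝ} {R' : Matrix m n ℝ} {t : ℝ} (hR : HasDerivAt R R' t) (v : m → ℝ) :
    HasDerivAt (fun s => (R s)ᵀ *ᵥ v) (R'ᵀ *ᵥ v) t := by
  let L : Matrix m n ℝ →ₗ[ℝ] n → ℝ :=
    { toFun := fun M => Mᵀ *ᵥ v
      map_add' := fun M N => by simp [add_mulVec]
      map_smul' := fun c M => by simp [smul_mulVec] }
  exact (LinearMap.toContinuousLinearMap L).hasFDerivAt.comp_hasDerivAt t hR

theorem Function.Periodic.eq_of_eqOn_Ioo {X : Type*} [TopologicalSpace X] [T2Space X]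
    {f : ℝ → X} {τ t : ℝ} {y : X} (hf : Continuous f) (hper : Function.Periodic f τ)
    (hτ : 0 < τ) (h : Set.EqOn f (fun _ => y) (Set.Ioo t (t + τ))) (s : ℝ) : f s = y := by
  have hIcc : Set.EqOn f (fun _ => y) (Set.Icc t (t + τ)) := by
    rw [← closure_Ioo (by linarith : t ≠ t + τ)]
    exact h.closure hf continuous_const
  rw [← toIcoMod_add_toIcoDiv_zsmul hτ t s, hper.zsmul]
  exact hIcc (Set.Ico_subset_Icc_self (toIcoMod_mem_Ico hτ t s))

section IntervalIntegral

variable {ι : Type*} [Fintype ι] {P : ℝ → Matrix ι ι ℝ} {a b : ℝ}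

lemma dotProduct_intervalIntegral_mulVec (hP : Continuous P) (x y : ι → ℝ) :
    x ⬝ᵥ (∫ s in a..b, P s) *ᵥ y = ∫ s in a..b, x ⬝ᵥ P s *ᵥ y := by
  let L : Matrix ι ι ℝ →ₗ[ℝ] ℝ :=
    { toFun := fun M => x ⬝ᵥ M *ᵥ y
      map_add' := fun M N => by simp [add_mulVec, dotProduct_add]
      map_smul' := fun c M => by simp [smul_mulVec, dotProduct_smul] }
  exact ((LinearMap.toContinuousLinearMap L).intervalIntegral_comp_comm
    (hP.intervalIntegrable a b)).symm

lemma isSymm_intervalIntegral (hP : Continuous P) (h : ∀ s, (P s).IsSymm) :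
    (∫ s in a..b, P s).IsSymm := by
  let L := LinearMap.toContinuousLinearMap (transposeLinearEquiv ι ι ℝ ℝ).toLinearMap
  exact (L.intervalIntegral_comp_comm (hP.intervalIntegrable a b)).symm.trans
    (integral_congr fun s _ => h s)

end IntervalIntegral

theorem PE_of_integral_sq_dotProduct_le {a : ℝ → Fin 3 → ℝ} (ha : Continuous a)
    (ha1 : ∀ t, a t ⬝ᵥ a t = 1) {T m μ : ℝ} (hT : 0 < T)
    (hm : ∀ t x, x ⬝ᵥ x = 1 → ∫ s in t..t + T, (a s ⬝ᵥ x) ^ 2 ≤ m) (hμ : μ ≤ 1 - m / T) :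
    PE a T μ := by
  intro t
  have hP : Continuous fun s => (skew3 (a s))ᵀ * skew3 (a s) :=
    (continuous_skew3.comp ha).matrix_transpose.matrix_mul (continuous_skew3.comp ha)
  rw [posSemidef_iff_dotProduct_mulVec, isHermitian_iff_isSymm]
  refine ⟨((isSymm_intervalIntegral hP fun s => isSymm_transpose_mul_self _).smul _).sub
    (isSymm_one.smul _), fun x => ?_⟩
  have hquad : ∀ s, x ⬝ᵥ ((skew3 (a s))ᵀ * skew3 (a s)) *ᵥ x = x ⬝ᵥ x - (a s ⬝ᵥ x) ^ 2 := by
    intro s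
    rw [← mulVec_dotProduct_mulVec, skew3_mulVec, cross_dot_cross, ha1, one_mul,
      dotProduct_comm x (a s), sq]
  have hbound := le_mul_dotProduct_self_of_forall_dotProduct_self_eq_one
    (q := fun x => ∫ s in t..t + T, (a s ⬝ᵥ x) ^ 2)
    (fun c x => by
      simp only [dotProduct_smul, smul_eq_mul, mul_pow, intervalIntegral.integral_const_mul])
    (hm t) x
  have hintegral : x ⬝ᵥ (∫ s in t..t + T, (skew3 (a s))ᵀ * skew3 (a s)) *ᵥ x =
      T * (x ⬝ᵥ x) - ∫ s in t..t + T, (a s ⬝ᵥ x) ^ 2 := by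
    rw [dotProduct_intervalIntegral_mulVec hP, integral_congr fun s _ => hquad s,
      integral_sub intervalIntegrable_const
        ((by fun_prop : Continuous fun s => (a s ⬝ᵥ x) ^ 2).intervalIntegrable _ _),
      intervalIntegral.integral_const, smul_eq_mul, add_sub_cancel_left]
  rw [star_trivial, sub_mulVec, dotProduct_sub, smul_mulVec, dotProduct_smul, smul_mulVec,
    dotProduct_smul, one_mulVec, hintegral, smul_eq_mul, smul_eq_mul, sub_nonneg]
  have hx : 0 ≤ x ⬝ᵥ x := by simpa using dotProduct_self_star_nonneg x
  calc μ * (x ⬝ᵥ x) ≤ (1 - m / T) * (x ⬝ᵥ x) := by gcongr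
    _ = T⁻¹ * (T * (x ⬝ᵥ x) - m * (x ⬝ᵥ x)) := by field_simp
    _ ≤ _ := by gcongr

section Rotation

variable {ω : ℝ → Fin 3 → ℝ}

theorem dotProduct_eq_of_hasDerivAt_cross {b c : ℝ → Fin 3 → ℝ}
    (hb : ∀ t, HasDerivAt b (b t ⨯₃ ω t) t) (hc : ∀ t, HasDerivAt c (c t ⨯₃ ω t) t) (s t : ℝ) :
    b s ⬝ᵥ c s = b t ⬝ᵥ c t := by
  have hd : ∀ t, HasDerivAt (fun s => b s ⬝ᵥ c s) 0 t := fun t => by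
    convert (hb t).dotProduct (hc t) using 1
    rw [dotProduct_comm, triple_product_permutation, ← cross_anticomm, dotProduct_neg,
      neg_add_cancel]
  exact is_const_of_deriv_eq_zero (fun t => (hd t).differentiableAt) (fun t => (hd t).deriv) s t

theorem eq_of_hasDerivAt_cross {b c : ℝ → Fin 3 → ℝ}
    (hb : ∀ t, HasDerivAt b (b t ⨯₃ ω t) t) (hc : ∀ t, HasDerivAt c (c t ⨯₃ ω t) t) {t₀ : ℝ}
    (h : b t₀ = c t₀) : b = c := by
  have hd : ∀ t, HasDerivAt (b - c) ((b - c) t ⨯₃ ω t) t := fun t => by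
    simpa [LinearMap.sub_apply] using (hb t).sub (hc t)
  funext t
  have := dotProduct_eq_of_hasDerivAt_cross hd hd t t₀
  rw [Pi.sub_apply b c t₀, h, sub_self, dotProduct_zero, dotProduct_self_eq_zero] at this
  exact sub_eq_zero.1 this

theorem cross_eq_zero_of_sq_dotProduct_eq_one {b : ℝ → Fin 3 → ℝ}
    (hb : ∀ t, HasDerivAt b (b t ⨯₃ ω t) t) (hb1 : ∀ t, b t ⬝ᵥ b t = 1) {x : Fin 3 → ℝ}
    (hx : x ⬝ᵥ x = 1) {U : Set ℝ} (hU : IsOpen U) (h : ∀ s ∈ U, (b s ⬝ᵥ x) ^ 2 = 1) :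
    ∀ s ∈ U, x ⨯₃ ω s = 0 := by
  intro s hs
  have hbx : ∀ u ∈ U, b u = (b u ⬝ᵥ x) • x := fun u hu =>
    eq_dotProduct_smul_of_sq_dotProduct_eq_one (hb1 u) hx (h u hu)
  -- `b` moves along the line `ℝ x`, while `b'` is orthogonal to `x`: so `b' = 0`.
  have hproj : HasDerivAt (fun u => b u ⬝ᵥ x) 0 s := by
    convert (hb s).dotProduct (hasDerivAt_const s x) using 1
    rw [hbx s hs, map_smul, LinearMap.smul_apply, dotProduct_zero, add_zero, smul_dotProduct,
      dotProduct_comm (x ⨯₃ ω s), dot_self_cross, smul_zero]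
  have hline : HasDerivAt b 0 s := by
    have := hproj.smul_const x
    rw [zero_smul] at this
    exact this.congr_of_eventuallyEq (Filter.eventually_of_mem (hU.mem_nhds hs) hbx)
  have hbs := (hb s).unique hline
  rw [hbx s hs, map_smul, LinearMap.smul_apply] at hbs
  refine (smul_eq_zero.1 hbs).resolve_left fun h0 => ?_
  simpa [h0] using h s hs

theorem integral_sq_dotProduct_lt (hω : Continuous ω) {τ : ℝ} (hper : Function.Periodic ω τ)
    (hτ : 0 < τ) (hnonplanar : ¬ ∃ (n : Fin 3 → ℝ) (b : ℝ), n ≠ 0 ∧ ∀ t, n ⬝ᵥ ω t = b)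
    {b : ℝ → Fin 3 → ℝ} (hb : ∀ t, HasDerivAt b (b t ⨯₃ ω t) t) (hb1 : ∀ t, b t ⬝ᵥ b t = 1)
    {x : Fin 3 → ℝ} (hx : x ⬝ᵥ x = 1) (t : ℝ) :
    ∫ s in t..t + τ, (b s ⬝ᵥ x) ^ 2 < τ := by
  have hbcont : Continuous b := continuous_iff_continuousAt.2 fun t => (hb t).continuousAt
  have hle : ∀ s, (b s ⬝ᵥ x) ^ 2 ≤ 1 := fun s => by
    simpa [hb1 s, hx] using sq_dotProduct_le (b s) x
  by_contra hge
  have heq : ∀ s ∈ Set.Ioo t (t + τ), (b s ⬝ᵥ x) ^ 2 = 1 := by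
    refine fun s hs => (hle s).antisymm (not_lt.1 fun hlt => hge ?_)
    have := integral_lt_integral_of_continuousOn_of_le_of_exists_lt (by linarith)
      (by fun_prop) continuousOn_const (fun u _ => hle u) ⟨s, Set.Ioo_subset_Icc_self hs, hlt⟩
    simpa using this
  have hcross := cross_eq_zero_of_sq_dotProduct_eq_one hb hb1 hx isOpen_Ioo heq
  obtain ⟨n, hn, hnx⟩ := exists_ne_zero_dotProduct_eq_zero x
  have hnω : ∀ s ∈ Set.Ioo t (t + τ), n ⬝ᵥ ω s = 0 := fun s hs => by
    have := cross_dot_cross x (ω s) x n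
    rw [hcross s hs, zero_dotProduct, hx, dotProduct_comm x n, hnx, dotProduct_comm] at this
    linarith
  exact hnonplanar ⟨n, 0, hn, (hper.comp (n ⬝ᵥ ·)).eq_of_eqOn_Ioo (by fun_prop) hτ hnω⟩

variable {R : ℝ → Matrix (Fin 3) (Fin 3) ℝ}

theorem hasDerivAt_transpose_mulVec (hR : ∀ t, HasDerivAt R (R t * skew3 (ω t)) t)
    (v : Fin 3 → ℝ) (t : ℝ) :
    HasDerivAt (fun s => (R s)ᵀ *ᵥ v) (((R t)ᵀ *ᵥ v) ⨯₃ ω t) t := by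
  convert (hR t).transpose_mulVec v using 1
  rw [mulVec_transpose, mulVec_transpose, ← vecMul_vecMul, vecMul_skew3]

theorem transpose_mulVec_dotProduct_self (hR : ∀ t, HasDerivAt R (R t * skew3 (ω t)) t)
    {t₀ : ℝ} (h₀ : (R t₀)ᵀ * R t₀ = 1) (v : Fin 3 → ℝ) (t : ℝ) :
    (R t)ᵀ *ᵥ v ⬝ᵥ (R t)ᵀ *ᵥ v = v ⬝ᵥ v := by
  have hb := hasDerivAt_transpose_mulVec hR v
  rw [dotProduct_eq_of_hasDerivAt_cross hb hb t t₀, mulVec_dotProduct_mulVec, transpose_transpose,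
    mul_eq_one_comm.1 h₀, one_mulVec]

theorem exists_transpose_mulVec_add_eq (hR : ∀ t, HasDerivAt R (R t * skew3 (ω t)) t)
    {t₀ : ℝ} (h₀ : (R t₀)ᵀ * R t₀ = 1) {c : ℝ} (hc : ∀ t, ω (t + c) = ω t) (v : Fin 3 → ℝ) :
    ∃ w, w ⬝ᵥ w = v ⬝ᵥ v ∧ ∀ t, (R (t + c))ᵀ *ᵥ v = (R t)ᵀ *ᵥ w := by
  set w := R t₀ *ᵥ ((R (t₀ + c))ᵀ *ᵥ v)
  have hshift : ∀ t, HasDerivAt (fun s => (R (s + c))ᵀ *ᵥ v) (((R (t + c))ᵀ *ᵥ v) ⨯₃ ω t) t :=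
    fun t => by simpa [hc] using (hasDerivAt_transpose_mulVec hR v (t + c)).comp_add_const t c
  have h : (fun t => (R (t + c))ᵀ *ᵥ v) = fun t => (R t)ᵀ *ᵥ w :=
    eq_of_hasDerivAt_cross hshift (hasDerivAt_transpose_mulVec hR w) (t₀ := t₀)
      (by rw [mulVec_mulVec, h₀, one_mulVec])
  refine ⟨w, ?_, congrFun h⟩
  rw [mulVec_dotProduct_mulVec, h₀, one_mulVec, transpose_mulVec_dotProduct_self hR h₀]

theorem exists_lt_forall_integral_sq_le_of_mem_Icc
    (hR : ∀ t, HasDerivAt R (R t * skew3 (ω t)) t) {t₀ : ℝ} (h₀ : (R t₀)ᵀ * R t₀ = 1)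
    (hω : Continuous ω) {τ : ℝ} (hper : Function.Periodic ω τ) (hτ : 0 < τ)
    (hnonplanar : ¬ ∃ (n : Fin 3 → ℝ) (b : ℝ), n ≠ 0 ∧ ∀ t, n ⬝ᵥ ω t = b) :
    ∃ m < τ, ∀ t ∈ Set.Icc 0 τ, ∀ v x : Fin 3 → ℝ, v ⬝ᵥ v = 1 → x ⬝ᵥ x = 1 →
      ∫ s in t..t + τ, ((R s)ᵀ *ᵥ v ⬝ᵥ x) ^ 2 ≤ m := by
  set S := {v : Fin 3 → ℝ | v ⬝ᵥ v = 1}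
  have hRcont : Continuous R := continuous_iff_continuousAt.2 fun t => (hR t).continuousAt
  have hK : IsCompact (Set.Icc 0 τ ×ˢ (S ×ˢ S)) :=
    isCompact_Icc.prod (isCompact_setOf_dotProduct_self_eq_one.prod
      isCompact_setOf_dotProduct_self_eq_one)
  have hS : (Pi.single 0 1 : Fin 3 → ℝ) ∈ S := by simp [S]
  let F : ℝ × (Fin 3 → ℝ) × (Fin 3 → ℝ) → ℝ :=
    fun p => ∫ s in 0..τ, ((R (s + p.1))ᵀ *ᵥ p.2.1 ⬝ᵥ p.2.2) ^ 2
  have hF : Continuous F :=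
    continuous_parametric_intervalIntegral_of_continuous' (by fun_prop) _ _
  have hFeq : ∀ p, F p = ∫ s in p.1..p.1 + τ, ((R s)ᵀ *ᵥ p.2.1 ⬝ᵥ p.2.2) ^ 2 := fun p => by
    simp only [F, integral_comp_add_right
      (fun s => ((R s)ᵀ *ᵥ p.2.1 ⬝ᵥ p.2.2) ^ 2), zero_add, add_comm τ]
  obtain ⟨p₀, hp₀, hmax⟩ := hK.exists_isMaxOn ⟨(0, _, _), Set.left_mem_Icc.2 hτ.le, hS, hS⟩
    hF.continuousOn
  refine ⟨F p₀, ?_, fun t ht v x hv hx => hFeq (t, v, x) ▸ hmax ⟨ht, hv, hx⟩⟩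
  rw [hFeq]
  exact integral_sq_dotProduct_lt hω hper hτ hnonplanar (hasDerivAt_transpose_mulVec hR _)
    (fun t => (transpose_mulVec_dotProduct_self hR h₀ _ t).trans hp₀.2.1) hp₀.2.2 _

theorem exists_lt_forall_integral_sq_le
    (hR : ∀ t, HasDerivAt R (R t * skew3 (ω t)) t) {t₀ : ℝ} (h₀ : (R t₀)ᵀ * R t₀ = 1)
    (hω : Continuous ω) {τ : ℝ} (hper : Function.Periodic ω τ) (hτ : 0 < τ)
    (hnonplanar : ¬ ∃ (n : Fin 3 → ℝ) (b : ℝ), n ≠ 0 ∧ ∀ t, n ⬝ᵥ ω t = b) :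
    ∃ m < τ, ∀ t, ∀ v x : Fin 3 → ℝ, v ⬝ᵥ v = 1 → x ⬝ᵥ x = 1 →
      ∫ s in t..t + τ, ((R s)ᵀ *ᵥ v ⬝ᵥ x) ^ 2 ≤ m := by
  obtain ⟨m, hmτ, hm⟩ := exists_lt_forall_integral_sq_le_of_mem_Icc hR h₀ hω hper hτ hnonplanar
  refine ⟨m, hmτ, fun t v x hv hx => ?_⟩
  obtain ⟨t', ht', n, rfl⟩ : ∃ t' ∈ Set.Icc 0 τ, ∃ n : ℤ, t = t' + n • τ :=
    ⟨_, Set.Ico_subset_Icc_self (toIcoMod_mem_Ico' hτ t), _,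
      (toIcoMod_add_toIcoDiv_zsmul hτ 0 t).symm⟩
  obtain ⟨w, hw, hshift⟩ := exists_transpose_mulVec_add_eq hR h₀ (hper.zsmul n) v
  rw [add_right_comm, ← integral_comp_add_right]
  simp only [hshift]
  exact hm t' ht' w x (hw.trans hv) hx

end Rotation

theorem type3_PE_general
    (E : (Fin 3 → ℝ) → Fin 3 → ℝ)
    (t₀ : ℝ)
    (R : ℝ → Matrix (Fin 3) (Fin 3) ℝ) (ω : ℝ → Fin 3 → ℝ)
    (hRode : ∀ t, HasDerivAt R (R t * skew3 (ω t)) t)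
    (hωode : ∀ t, HasDerivAt ω (E (ω t)) t)
    (hR₀orth : (R t₀)ᵀ * R t₀ = 1)
    (τp : ℝ) (hτp : 0 < τp) (hper : ∀ t, ω (t + τp) = ω t)
    (hnonplanar : ¬ ∃ (n : Fin 3 → ℝ) (b : ℝ), n ≠ 0 ∧ ∀ t, n ⬝ᵥ ω t = b)
    (aring : Fin 3 → ℝ) (haring : enorm3 aring = 1)
    (a : ℝ → Fin 3 → ℝ) (ha : ∀ t, a t = (R t)ᵀ.mulVec aring) :
    ∃ T μ : ℝ, 0 < T ∧ 0 < μ ∧ μ < 1 ∧ PE a T μ := by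
  obtain rfl : a = fun t => (R t)ᵀ *ᵥ aring := funext ha
  have hωcont : Continuous ω := continuous_iff_continuousAt.2 fun t => (hωode t).continuousAt
  have haring1 : aring ⬝ᵥ aring = 1 := by
    rw [enorm3, Real.sqrt_eq_one] at haring
    simpa [dotProduct, sq] using haring
  obtain ⟨m, hmτ, hm⟩ := exists_lt_forall_integral_sq_le hRode hR₀orth hωcont hper hτp hnonplanar
  refine ⟨τp, min (1 - m / τp) (1 / 2), hτp,
    lt_min (by rw [sub_pos, div_lt_one hτp]; exact hmτ) one_half_pos,
    (min_le_right _ _).trans_lt one_half_lt_one, ?_⟩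
  have hacont : Continuous fun t => (R t)ᵀ *ᵥ aring :=
    continuous_iff_continuousAt.2 fun t => (hasDerivAt_transpose_mulVec hRode aring t).continuousAt
  exact PE_of_integral_sq_dotProduct_le hacont
    (fun t => (transpose_mulVec_dotProduct_self hRode hR₀orth aring t).trans haring1) hτp
    (fun t x hx => hm t aring x haring1 hx) (min_le_left _ _)

/-- for a Type 3 free-rotation trajectory (ω periodic and not contained
in any affine plane), the measurement `a(t) = R(t)ᵀå` satisfies the persistent
excitation condition for some parameters `T > 0`, `μ ∈ (0,1)`, whatever the unit
reference vector `å`. -/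
theorem type3_PE
    (J1 J2 J3 : ℝ) (hJ1 : 0 < J1) (hJ2 : 0 < J2) (hJ3 : 0 < J3)
    (J : Matrix (Fin 3) (Fin 3) ℝ) (hJ : J = Matrix.diagonal ![J1, J2, J3])
    (E : (Fin 3 → ℝ) → Fin 3 → ℝ)
    (hE : ∀ w, E w = J⁻¹.mulVec (cross3 (J.mulVec w) w))
    (t₀ : ℝ)
    (R : ℝ → Matrix (Fin 3) (Fin 3) ℝ) (ω : ℝ → Fin 3 → ℝ)
    (hRode : ∀ t, HasDerivAt R (R t * skew3 (ω t)) t)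
    (hωode : ∀ t, HasDerivAt ω (E (ω t)) t)
    (hR₀orth : (R t₀)ᵀ * R t₀ = 1) (hR₀det : (R t₀).det = 1)
    (τp : ℝ) (hτp : 0 < τp) (hper : ∀ t, ω (t + τp) = ω t)
    (hnonplanar : ¬ ∃ (n : Fin 3 → ℝ) (b : ℝ), n ≠ 0 ∧ ∀ t, n ⬝ᵥ ω t = b)
    (aring : Fin 3 → ℝ) (haring : enorm3 aring = 1)
    (a : ℝ → Fin 3 → ℝ) (ha : ∀ t, a t = (R t)ᵀ.mulVec aring) :
    ∃ T μ : ℝ, 0 < T ∧ 0 < μ ∧ μ < 1 ∧ PE a T μ :=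
  type3_PE_general E t₀ R ω hRode hωode hR₀orth τp hτp hper hnonplanar aring haring a ha

end
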